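/- arXiv:2503.01241 — 6 statements merged into one kernel-verified Lean document; each statement's English description precedes it below -/
import Mathlib

section
/- Let (X, τ) be a topological space, I an ideal on X, and f : X → X a continuous map. If f is topologically transitive, f is an open map, and I is codense (i.e., τ ∩ I = {∅}), then f is I-transitive, i.e., for every pair of nonempty open sets U, V there is a positive integer n with f^n(U) ∩ V ∉ I. -/
open Set Function Topology TopologicalSpace

variable {X : Type*}

/-- An ideal of sets: contains ∅, downward closed, closed under finite unions. -/
def IsIdealSet (I : Set (Set X)) : Prop :=
  ∅ ∈ I ∧ (∀ A B : Set X, A ∈ I → B ⊆ A → B ∈ I) ∧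
    (∀ A B : Set X, A ∈ I → B ∈ I → A ∪ B ∈ I)

variable [TopologicalSpace X]

/-- I is codense: the only open member of I is ∅. -/
def Codense (I : Set (Set X)) : Prop := ∀ U : Set X, IsOpen U → U ∈ I → U = ∅

/-- topological transitivity -/
def TopTrans (f : X → X) : Prop :=
  ∀ U V : Set X, IsOpen U → IsOpen V → U.Nonempty → V.Nonempty →
    ∃ n : ℕ, 0 < n ∧ (f^[n] '' U ∩ V).Nonempty

/-- I-transitivity -/
def ITrans (I : Set (Set X)) (f : X → X) : Prop :=
  ∀ U V : Set X, IsOpen U → IsOpen V → U.Nonempty → V.Nonempty →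
    ∃ n : ℕ, 0 < n ∧ f^[n] '' U ∩ V ∉ I

/-- Kuratowski local function A* -/
def locFn (I : Set (Set X)) (A : Set X) : Set X :=
  {x | ∀ U : Set X, IsOpen U → x ∈ U → U ∩ A ∉ I}

/-- ψ(A) = X \ (X \ A)* -/
def psiOp (I : Set (Set X)) (A : Set X) : Set X := (locFn I Aᶜ)ᶜ

/-- A is I-dense: meets every nonempty open set in a set not in I. -/
def IDense (I : Set (Set X)) (A : Set X) : Prop :=
  ∀ O : Set X, IsOpen O → O.Nonempty → A ∩ O ∉ I

/-- I is compatible with the topology (I ∼ τ). -/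
def Compat (I : Set (Set X)) : Prop :=
  ∀ A : Set X, (∀ x ∈ A, ∃ O : Set X, IsOpen O ∧ x ∈ O ∧ O ∩ A ∈ I) → A ∈ I

/-- countable additivity -/
def CountablyAdditive (I : Set (Set X)) : Prop :=
  ∀ g : ℕ → Set X, (∀ n, g n ∈ I) → (⋃ n, g n) ∈ I

/-- preopen set -/
def Preopen (A : Set X) : Prop := A ⊆ interior (closure A)

/-- completely codense ideal -/
def CompletelyCodense (I : Set (Set X)) : Prop :=
  ∀ A : Set X, Preopen A → A ∈ I → A = ∅

theorem stmt0 (I : Set (Set X)) (f : X → X) (hI : IsIdealSet I)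
    (hf : Continuous f) (htrans : TopTrans f) (hopen : IsOpenMap f)
    (hcod : Codense I) : ITrans I f := by
  intro U V hU hV hUne hVne
  obtain ⟨n, hn, hne⟩ := htrans U V hU hV hUne hVne
  refine ⟨n, hn, fun hmem => ?_⟩
  have hiter : IsOpenMap (f^[n]) := by
    clear hn hne hmem
    induction n with
    | zero => simpa using IsOpenMap.id
    | succ k ih => rw [Function.iterate_succ']; exact hopen.comp ih
  have hopenI : IsOpen (f^[n] '' U ∩ V) := (hiter U hU).inter hV
  have := hcod _ hopenI hmem
  rw [this] at hne
  exact hne.ne_empty rfl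
end

section
/- Let (X, τ, I) be an ideal topological space and f : X → X continuous and I-transitive. If A ⊆ X is closed, f(X \ A) ⊆ X \ A, and A ≠ X, then ψ(A*) = ∅, where A* is the local function of A and ψ(B) = X \ (X \ B)*. -/
open Set Function Topology TopologicalSpace

variable {X : Type*}

variable [TopologicalSpace X]

/-!
Since `A` is closed, `A* ⊆ A`, so `(X \ A*)* ⊇ (X \ A)*` and it suffices that `(X \ A)* = X`.
The set `X \ A` is nonempty, open and forward-invariant, so `I`-transitivity gives, for every
nonempty open `U`, some `n` with `f^n(X \ A) ∩ U ∉ I`; as `f^n(X \ A) ⊆ X \ A`, also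
`(X \ A) ∩ U ∉ I`.
-/

theorem locFn_mono {I : Set (Set X)} (hI : IsIdealSet I) {A B : Set X} (hAB : A ⊆ B) :
    locFn I A ⊆ locFn I B := fun _ hx U hU hxU hUB =>
  hx U hU hxU (hI.2.1 _ _ hUB (inter_subset_inter_right U hAB))

theorem locFn_subset_closure {I : Set (Set X)} (hI : IsIdealSet I) (A : Set X) :
    locFn I A ⊆ closure A := by
  intro x hx
  by_contra hxA
  refine hx (closure A)ᶜ isClosed_closure.isOpen_compl hxA ?_
  rw [(disjoint_compl_left.mono_right subset_closure).inter_eq]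
  exact hI.1

theorem locFn_eq_univ_of_iDense {I : Set (Set X)} {A : Set X} (hA : IDense I A) :
    locFn I A = univ :=
  eq_univ_of_forall fun _ U hU hxU => by
    rw [inter_comm]
    exact hA U hU ⟨_, hxU⟩

theorem IDense.of_mapsTo {I : Set (Set X)} (hI : IsIdealSet I) {f : X → X} (htrans : ITrans I f)
    {W : Set X} (hW : IsOpen W) (hWne : W.Nonempty) (hfW : MapsTo f W W) : IDense I W := by
  intro O hO hOne hWO
  obtain ⟨n, -, hn⟩ := htrans W O hW hO hWne hOne
  exact hn (hI.2.1 _ _ hWO (inter_subset_inter_left O (hfW.iterate n).image_subset))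

theorem stmt6_general (I : Set (Set X)) (f : X → X) (hI : IsIdealSet I)
    (htrans : ITrans I f) (A : Set X) (hA : IsClosed A)
    (hinv : f '' Aᶜ ⊆ Aᶜ) (hne : A ≠ Set.univ) :
    psiOp I (locFn I A) = ∅ := by
  have hdense : IDense I Aᶜ :=
    .of_mapsTo hI htrans hA.isOpen_compl (nonempty_compl.2 hne) (mapsTo_iff_image_subset.2 hinv)
  have hstar : Aᶜ ⊆ (locFn I A)ᶜ :=
    compl_subset_compl.2 ((locFn_subset_closure hI A).trans hA.closure_subset)
  rw [psiOp, compl_empty_iff]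
  exact eq_univ_of_subset (locFn_mono hI hstar) (locFn_eq_univ_of_iDense hdense)

theorem stmt6 (I : Set (Set X)) (f : X → X) (hI : IsIdealSet I)
    (hf : Continuous f) (htrans : ITrans I f) (A : Set X) (hA : IsClosed A)
    (hinv : f '' Aᶜ ⊆ Aᶜ) (hne : A ≠ Set.univ) :
    psiOp I (locFn I A) = ∅ :=
  stmt6_general I f hI htrans A hA hinv hne
end

section
/- Let (X, τ, I) be an ideal topological space and f : X → X continuous and I-transitive. If U ⊆ X is open and invariant (f(U) ⊆ U), then U = ∅ or U is I-dense in X. -/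
open Set Function Topology TopologicalSpace

variable {X : Type*}

variable [TopologicalSpace X]

theorem stmt8_general (I : Set (Set X)) (f : X → X) (hI : IsIdealSet I)
    (htrans : ITrans I f) (U : Set X) (hU : IsOpen U)
    (hinv : f '' U ⊆ U) : U = ∅ ∨ IDense I U := by
  refine U.eq_empty_or_nonempty.imp id fun hne O hO hOne hUO => ?_
  obtain ⟨n, -, hn⟩ := htrans U O hU hO hne hOne
  have hiter : f^[n] '' U ⊆ U := ((mapsTo_iff_image_subset.2 hinv).iterate n).image_subset
  exact hn (hI.2.1 _ _ hUO (inter_subset_inter_left O hiter))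

theorem stmt8 (I : Set (Set X)) (f : X → X) (hI : IsIdealSet I)
    (hf : Continuous f) (htrans : ITrans I f) (U : Set X) (hU : IsOpen U)
    (hinv : f '' U ⊆ U) : U = ∅ ∨ IDense I U :=
  stmt8_general I f hI htrans U hU hinv
end

section
/- Let (X, τ, I) be an ideal topological space with I ∼ τ (compatible ideal), and f : X → X continuous and I-transitive. Then for every A ⊆ X, the set X \ (ψ(A) \ A) is I-dense in X, where ψ(A) = X \ (X \ A)*. -/
open Set Function Topology TopologicalSpace

variable {X : Type*}

variable [TopologicalSpace X]

theorem stmt10 (I : Set (Set X)) (f : X → X) (hI : IsIdealSet I)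
    (hcompat : Compat I) (hf : Continuous f) (htrans : ITrans I f) :
    ∀ A : Set X, IDense I ((psiOp I A \ A)ᶜ) := by
  intro A O hO hOne hmem
  -- S := psiOp I A \ A is in I by compatibility
  have hS : psiOp I A \ A ∈ I := by
    apply hcompat
    intro x hx
    obtain ⟨hpsi, hA⟩ := hx
    simp only [psiOp, locFn, Set.mem_compl_iff, Set.mem_setOf_eq, not_forall] at hpsi
    obtain ⟨U, hU, hxU, hUI⟩ := hpsi
    rw [not_not] at hUI
    exact ⟨U, hU, hxU, hI.2.1 _ _ hUI (fun y hy => ⟨hy.1, hy.2.2⟩)⟩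
  -- then O ∈ I
  have hO_in : O ∈ I := by
    have : O ⊆ ((psiOp I A \ A)ᶜ ∩ O) ∪ (psiOp I A \ A) := by
      intro x hx
      by_cases h : x ∈ psiOp I A \ A
      · exact Or.inr h
      · exact Or.inl ⟨h, hx⟩
    exact hI.2.1 _ _ (hI.2.2 _ _ hmem hS) this
  obtain ⟨n, -, hn⟩ := htrans O O hO hO hOne hOne
  exact hn (hI.2.1 _ _ hO_in (fun y hy => hy.2))
end

section
/- Let (X, τ, I) be an ideal topological space. Then I is compatible with τ (i.e., whenever every point x of a set A has an open neighborhood O with O ∩ A ∈ I, then A ∈ I) if and only if A \ A* ∈ I for every A ⊆ X. -/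
open Set Function Topology TopologicalSpace

variable {X : Type*}

variable [TopologicalSpace X]

theorem stmt14 (I : Set (Set X)) (hI : IsIdealSet I) :
    Compat I ↔ ∀ A : Set X, A \ locFn I A ∈ I := by
  obtain ⟨h0, hdn, hun⟩ := hI
  constructor
  · intro hc A
    apply hc
    rintro x ⟨hxA, hxns⟩
    simp only [locFn, mem_setOf_eq, not_forall] at hxns
    obtain ⟨U, hU, hxU, hUA⟩ := hxns
    push_neg at hUA
    exact ⟨U, hU, hxU, hdn _ _ hUA (by intro y ⟨hy1, hy2⟩; exact ⟨hy1, hy2.1⟩)⟩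
  · intro h A hA
    have : A ∩ locFn I A = ∅ := by
      ext x
      simp only [mem_inter_iff, mem_empty_iff_false, iff_false]
      rintro ⟨hxA, hxs⟩
      obtain ⟨O, hO, hxO, hOA⟩ := hA x hxA
      exact hxs O hO hxO hOA
    have hAe : A = A \ locFn I A := by
      rw [eq_comm, sdiff_eq_left]
      exact disjoint_iff_inter_eq_empty.mpr this
    rw [hAe]; exact h A
end

section
/- Let (X, τ, I) be an ideal topological space. Then I is completely codense (PO(X) ∩ I = {∅}) if and only if every dense subset of X is I-dense. -/
open Set Function Topology TopologicalSpace

variable {X : Type*}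

variable [TopologicalSpace X]

theorem stmt15 (I : Set (Set X)) (hI : IsIdealSet I) :
    CompletelyCodense I ↔ ∀ A : Set X, Dense A → IDense I A := by
  obtain ⟨hempty, hdown, -⟩ := hI
  constructor
  · intro hcc A hA O hO hOne hmem
    have hsub : O ⊆ closure (A ∩ O) := by
      intro x hx
      rw [mem_closure_iff]
      intro U hU hxU
      obtain ⟨y, hy⟩ := hA.inter_open_nonempty (U ∩ O) (hU.inter hO) ⟨x, hxU, hx⟩
      exact ⟨y, hy.1.1, hy.2, hy.1.2⟩
    have hpre : Preopen (A ∩ O) := fun x hx =>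
      mem_of_mem_of_subset (hO.subset_interior_iff.2 hsub hx.2)
        (interior_mono (subset_refl _))
    have := hcc _ hpre hmem
    obtain ⟨y, hy⟩ := hA.inter_open_nonempty O hO hOne
    exact absurd this (Nonempty.ne_empty ⟨y, hy.2, hy.1⟩)
  · intro h A hpre hmem
    by_contra hne
    have hAne : A.Nonempty := nonempty_iff_ne_empty.2 hne
    set D : Set X := A ∪ (closure A)ᶜ with hD
    have hdense : Dense D := by
      intro x
      rcases em (x ∈ closure A) with hx | hx
      · exact closure_mono subset_union_left hx
      · exact subset_closure (Or.inr hx)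
    have hOopen : IsOpen (interior (closure A)) := isOpen_interior
    have hOne : (interior (closure A)).Nonempty := hAne.mono hpre
    have hDO : D ∩ interior (closure A) ⊆ A := by
      rintro x ⟨hx | hx, hxO⟩
      · exact hx
      · exact absurd (interior_subset hxO) hx
    exact h D hdense _ hOopen hOne (hdown A _ hmem hDO)
end
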